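/- arXiv:2305.02287 — 4 statements merged into one kernel-verified Lean document; each statement's English description precedes it below -/
import Mathlib

section
/- Let q ∈ ℕ, and let b ∈ ℤ and d be a positive integer with gcd(d·b, q) = 1. Then s(q;b)/d ≤ s(q; b·d) ≤ d · s(q;b). -/
/-- The minimum `s(q;b)` of the Euclidean norm over nonzero elements of the lattice
`Λ_{q,b} = {(n₁,n₂) ∈ ℤ² : n₁ + b·n₂ ≡ 0 (mod q)}`. -/
noncomputable def latMin (q : ℕ) (b : ℤ) : ℝ :=
  sInf {r : ℝ | ∃ n : ℤ × ℤ, n ≠ 0 ∧ (q : ℤ) ∣ n.1 + b * n.2 ∧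
    r = Real.sqrt ((n.1 : ℝ) ^ 2 + (n.2 : ℝ) ^ 2)}

private lemma latSet_nonempty (q : ℕ) (b : ℤ) :
    {r : ℝ | ∃ n : ℤ × ℤ, n ≠ 0 ∧ (q : ℤ) ∣ n.1 + b * n.2 ∧
      r = Real.sqrt ((n.1 : ℝ) ^ 2 + (n.2 : ℝ) ^ 2)}.Nonempty := by
  refine ⟨_, ⟨(-b, 1), ?_, ?_, rfl⟩⟩
  · simp [Prod.ext_iff]
  · simp

private lemma latSet_bddBelow (q : ℕ) (b : ℤ) :
    BddBelow {r : ℝ | ∃ n : ℤ × ℤ, n ≠ 0 ∧ (q : ℤ) ∣ n.1 + b * n.2 ∧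
      r = Real.sqrt ((n.1 : ℝ) ^ 2 + (n.2 : ℝ) ^ 2)} := by
  refine ⟨0, fun r hr => ?_⟩
  obtain ⟨n, -, -, rfl⟩ := hr
  positivity

private lemma sqrt_scale (d x y : ℝ) (hd : 1 ≤ d) :
    Real.sqrt ((d * x) ^ 2 + y ^ 2) ≤ d * Real.sqrt (x ^ 2 + y ^ 2) := by
  have h0 : (0:ℝ) ≤ d := by linarith
  have : d * Real.sqrt (x ^ 2 + y ^ 2) = Real.sqrt (d ^ 2 * (x ^ 2 + y ^ 2)) := by
    rw [Real.sqrt_mul (by positivity), Real.sqrt_sq h0]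
  rw [this]
  apply Real.sqrt_le_sqrt
  nlinarith [mul_nonneg (by nlinarith : (0:ℝ) ≤ d ^ 2 - 1) (sq_nonneg y)]

private lemma latMin_le_aux (q : ℕ) (b c d : ℤ) (hd : 0 < d)
    (h : ∀ n : ℤ × ℤ, n ≠ 0 → (q : ℤ) ∣ n.1 + c * n.2 →
      ∃ m : ℤ × ℤ, m ≠ 0 ∧ (q : ℤ) ∣ m.1 + b * m.2 ∧
        Real.sqrt ((m.1 : ℝ) ^ 2 + (m.2 : ℝ) ^ 2) ≤
          (d : ℝ) * Real.sqrt ((n.1 : ℝ) ^ 2 + (n.2 : ℝ) ^ 2)) :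
    latMin q b ≤ (d : ℝ) * latMin q c := by
  have hd' : (0:ℝ) < (d : ℝ) := by exact_mod_cast hd
  rw [mul_comm, ← div_le_iff₀ hd']
  apply le_csInf (latSet_nonempty q c)
  rintro r ⟨n, hn, hdvd, rfl⟩
  obtain ⟨m, hm, hmdvd, hle⟩ := h n hn hdvd
  rw [div_le_iff₀ hd', mul_comm]
  calc latMin q b ≤ Real.sqrt ((m.1 : ℝ) ^ 2 + (m.2 : ℝ) ^ 2) :=
        csInf_le (latSet_bddBelow q b) ⟨m, hm, hmdvd, rfl⟩
    _ ≤ _ := hle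

theorem latMin_mul (q : ℕ) (b d : ℤ) (hd : 0 < d)
    (hcop : IsCoprime (d * b) (q : ℤ)) :
    latMin q b / (d : ℝ) ≤ latMin q (b * d) ∧
      latMin q (b * d) ≤ (d : ℝ) * latMin q b := by
  have hd1 : (1:ℝ) ≤ (d : ℝ) := by exact_mod_cast hd
  have hdz : d ≠ 0 := hd.ne'
  have hd' : (0:ℝ) < (d : ℝ) := by exact_mod_cast hd
  constructor
  · rw [div_le_iff₀ hd', mul_comm]
    apply latMin_le_aux q b (b * d) d hd
    rintro ⟨n1, n2⟩ hn hdvd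
    refine ⟨(n1, d * n2), ?_, ?_, ?_⟩
    · intro hz
      rw [Prod.mk_eq_zero] at hz
      exact hn (Prod.mk_eq_zero.mpr ⟨hz.1, (mul_eq_zero.mp hz.2).resolve_left hdz⟩)
    · have : n1 + b * (d * n2) = n1 + b * d * n2 := by ring
      rw [this]; exact hdvd
    · push_cast
      have := sqrt_scale (d : ℝ) (n2 : ℝ) (n1 : ℝ) hd1
      calc Real.sqrt ((n1:ℝ)^2 + ((d:ℝ)*(n2:ℝ))^2)
          = Real.sqrt (((d:ℝ)*(n2:ℝ))^2 + (n1:ℝ)^2) := by ring_nf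
        _ ≤ (d:ℝ) * Real.sqrt ((n2:ℝ)^2 + (n1:ℝ)^2) := this
        _ = (d:ℝ) * Real.sqrt ((n1:ℝ)^2 + (n2:ℝ)^2) := by ring_nf
  · apply latMin_le_aux q (b * d) b d hd
    rintro ⟨n1, n2⟩ hn hdvd
    refine ⟨(d * n1, n2), ?_, ?_, ?_⟩
    · intro hz
      rw [Prod.mk_eq_zero] at hz
      exact hn (Prod.mk_eq_zero.mpr ⟨(mul_eq_zero.mp hz.1).resolve_left hdz, hz.2⟩)
    · have : d * n1 + b * d * n2 = d * (n1 + b * n2) := by ring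
      rw [this]
      exact hdvd.mul_left d
    · push_cast
      exact sqrt_scale (d : ℝ) (n1 : ℝ) (n2 : ℝ) hd1
end

section
/- Let q ∈ ℕ, let b ∈ ℤ and let d be a positive integer with gcd(d·b, q) = 1, and let d̄ be any integer with d·d̄ ≡ 1 (mod q). Then s(q;b)/d ≤ s(q; b·d̄) ≤ d · s(q;b). -/
lemma latMin_nonempty (q : ℕ) (c : ℤ) :
    Set.Nonempty {r : ℝ | ∃ n : ℤ × ℤ, n ≠ 0 ∧ (q : ℤ) ∣ n.1 + c * n.2 ∧
      r = Real.sqrt ((n.1 : ℝ) ^ 2 + (n.2 : ℝ) ^ 2)} := by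
  refine ⟨Real.sqrt (((-c : ℤ) : ℝ) ^ 2 + ((1 : ℤ) : ℝ) ^ 2), ⟨(-c, 1), ?_, ?_, rfl⟩⟩
  · simp [Prod.ext_iff]
  · simp

lemma latMin_bdd (q : ℕ) (c : ℤ) :
    BddBelow {r : ℝ | ∃ n : ℤ × ℤ, n ≠ 0 ∧ (q : ℤ) ∣ n.1 + c * n.2 ∧
      r = Real.sqrt ((n.1 : ℝ) ^ 2 + (n.2 : ℝ) ^ 2)} := by
  refine ⟨0, fun r hr => ?_⟩
  obtain ⟨n, -, -, rfl⟩ := hr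
  exact Real.sqrt_nonneg _

/-- General comparison lemma: if every nonzero vector of the `c'`-lattice can be matched
by a nonzero vector of the `c`-lattice whose norm is at most `d` times as large, then
`latMin q c ≤ d * latMin q c'`. -/
lemma latMin_le_mul (q : ℕ) (c c' : ℤ) (d : ℝ) (hd : 0 < d)
    (h : ∀ n : ℤ × ℤ, n ≠ 0 → (q : ℤ) ∣ n.1 + c' * n.2 →
      ∃ m : ℤ × ℤ, m ≠ 0 ∧ (q : ℤ) ∣ m.1 + c * m.2 ∧
        Real.sqrt ((m.1 : ℝ) ^ 2 + (m.2 : ℝ) ^ 2) ≤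
          d * Real.sqrt ((n.1 : ℝ) ^ 2 + (n.2 : ℝ) ^ 2)) :
    latMin q c ≤ d * latMin q c' := by
  rw [mul_comm, ← div_le_iff₀ hd]
  apply le_csInf (latMin_nonempty q c')
  rintro r ⟨n, hn, hdvd, rfl⟩
  obtain ⟨m, hm, hmdvd, hmle⟩ := h n hn hdvd
  rw [div_le_iff₀ hd, mul_comm]
  exact le_trans (csInf_le (latMin_bdd q c) ⟨m, hm, hmdvd, rfl⟩) hmle

theorem latMin_mul_inv (q : ℕ) (b d dbar : ℤ) (hd : 0 < d)
    (hcop : IsCoprime (d * b) (q : ℤ))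
    (hdbar : d * dbar ≡ 1 [ZMOD (q : ℤ)]) :
    latMin q b / (d : ℝ) ≤ latMin q (b * dbar) ∧
      latMin q (b * dbar) ≤ (d : ℝ) * latMin q b := by
  have hq : (q : ℤ) ∣ d * dbar - 1 := Int.ModEq.dvd hdbar.symm
  have hd1 : (1 : ℤ) ≤ d := hd
  have hdR : (0 : ℝ) < (d : ℝ) := by exact_mod_cast hd
  have hdR1 : (1 : ℝ) ≤ (d : ℝ) := by exact_mod_cast hd1
  have key : ∀ x y : ℝ, Real.sqrt (((d : ℝ) * x) ^ 2 + y ^ 2) ≤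
      (d : ℝ) * Real.sqrt (x ^ 2 + y ^ 2) := by
    intro x y
    rw [show (d : ℝ) * Real.sqrt (x ^ 2 + y ^ 2)
        = Real.sqrt ((d : ℝ) ^ 2 * (x ^ 2 + y ^ 2)) by
      rw [Real.sqrt_mul (by positivity), Real.sqrt_sq hdR.le]]
    apply Real.sqrt_le_sqrt
    nlinarith [sq_nonneg y, mul_nonneg (by linarith : (0:ℝ) ≤ (d:ℝ) - 1)
      (by linarith : (0:ℝ) ≤ (d:ℝ) + 1)]
  constructor
  · rw [div_le_iff₀ hdR, mul_comm]
    apply latMin_le_mul q b (b * dbar) (d : ℝ) hdR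
    rintro ⟨n₁, n₂⟩ hn hdvd
    refine ⟨(d * n₁, n₂), ?_, ?_, ?_⟩
    · simp only [ne_eq, Prod.mk_eq_zero, not_and_or] at hn ⊢
      rcases hn with h1 | h2
      · exact Or.inl (mul_ne_zero hd.ne' h1)
      · exact Or.inr h2
    · have h1 : (q : ℤ) ∣ d * (n₁ + b * dbar * n₂) := hdvd.mul_left d
      have h2 : (q : ℤ) ∣ b * n₂ * (d * dbar - 1) := hq.mul_left _
      have : d * n₁ + b * n₂ = d * (n₁ + b * dbar * n₂) - b * n₂ * (d * dbar - 1) := by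
        ring
      simpa [this] using dvd_sub h1 h2
    · simpa [mul_pow] using key (n₁ : ℝ) (n₂ : ℝ)
  · apply latMin_le_mul q (b * dbar) b (d : ℝ) hdR
    rintro ⟨n₁, n₂⟩ hn hdvd
    refine ⟨(n₁, d * n₂), ?_, ?_, ?_⟩
    · simp only [ne_eq, Prod.mk_eq_zero, not_and_or] at hn ⊢
      rcases hn with h1 | h2
      · exact Or.inl h1
      · exact Or.inr (mul_ne_zero hd.ne' h2)
    · have h1 : (q : ℤ) ∣ n₁ + b * n₂ := hdvd
      have h2 : (q : ℤ) ∣ b * n₂ * (d * dbar - 1) := hq.mul_left _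
      have : n₁ + b * dbar * (d * n₂) = (n₁ + b * n₂) + b * n₂ * (d * dbar - 1) := by
        ring
      simpa [this] using dvd_add h1 h2
    · have := key (n₂ : ℝ) (n₁ : ℝ)
      rw [add_comm ((n₁ : ℝ)^2), add_comm (((n₁:ℤ) : ℝ)^2)]
      simpa [mul_pow] using this
end

section
/- Let q ≥ 3 be a prime and b ∈ ℤ with q ∤ b. Let (x₁,x₂) ∈ Λ_{q,b} be a nonzero element of minimal Euclidean norm, i.e. ‖(x₁,x₂)‖ = s(q;b). Then x₁ ≠ 0, x₂ ≠ 0, and gcd(x₁,x₂) = 1. -/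
theorem minimal_vector_coprime (q : ℕ) (hq : Nat.Prime q) (hq3 : 3 ≤ q)
    (b : ℤ) (hb : ¬ (q : ℤ) ∣ b)
    (x : ℤ × ℤ) (hx0 : x ≠ 0) (hxmem : (q : ℤ) ∣ x.1 + b * x.2)
    (hxmin : Real.sqrt ((x.1 : ℝ) ^ 2 + (x.2 : ℝ) ^ 2) = latMin q b) :
    x.1 ≠ 0 ∧ x.2 ≠ 0 ∧ IsCoprime x.1 x.2 := by
  have hq1 : (1 : ℤ) < (q : ℤ) := by exact_mod_cast hq.one_lt
  have hqpos : (0 : ℤ) < (q : ℤ) := by linarith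
  have hqZ : Prime ((q : ℕ) : ℤ) := Nat.prime_iff_prime_int.mp hq
  -- integer-level minimality of x
  have hmin : ∀ n : ℤ × ℤ, n ≠ 0 → (q : ℤ) ∣ n.1 + b * n.2 →
      x.1 ^ 2 + x.2 ^ 2 ≤ n.1 ^ 2 + n.2 ^ 2 := by
    intro n hn0 hnd
    have hbdd : BddBelow {r : ℝ | ∃ n : ℤ × ℤ, n ≠ 0 ∧ (q : ℤ) ∣ n.1 + b * n.2 ∧
        r = Real.sqrt ((n.1 : ℝ) ^ 2 + (n.2 : ℝ) ^ 2)} := by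
      refine ⟨0, fun r hr => ?_⟩
      obtain ⟨m, -, -, rfl⟩ := hr
      positivity
    have hmem : Real.sqrt ((n.1 : ℝ) ^ 2 + (n.2 : ℝ) ^ 2) ∈
        {r : ℝ | ∃ n : ℤ × ℤ, n ≠ 0 ∧ (q : ℤ) ∣ n.1 + b * n.2 ∧
          r = Real.sqrt ((n.1 : ℝ) ^ 2 + (n.2 : ℝ) ^ 2)} := ⟨n, hn0, hnd, rfl⟩
    have hle : Real.sqrt ((x.1 : ℝ) ^ 2 + (x.2 : ℝ) ^ 2) ≤
        Real.sqrt ((n.1 : ℝ) ^ 2 + (n.2 : ℝ) ^ 2) := by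
      rw [hxmin]; exact csInf_le hbdd hmem
    have hn' : (0 : ℝ) ≤ (n.1 : ℝ) ^ 2 + (n.2 : ℝ) ^ 2 := by positivity
    have hR : ((x.1 : ℝ) ^ 2 + (x.2 : ℝ) ^ 2) ≤ (n.1 : ℝ) ^ 2 + (n.2 : ℝ) ^ 2 :=
      (Real.sqrt_le_sqrt_iff hn').mp hle
    exact_mod_cast hR
  -- a small candidate vector: (-(b % q), 1)
  set b' : ℤ := b % (q : ℤ) with hb'def
  have hb'nonneg : 0 ≤ b' := Int.emod_nonneg b (by positivity)
  have hb'lt : b' < (q : ℤ) := Int.emod_lt_of_pos b hqpos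
  have hdvd' : (q : ℤ) ∣ -b' + b * 1 := by
    have : b % (q : ℤ) = b - (q : ℤ) * (b / (q : ℤ)) := Int.emod_def b (q : ℤ)
    rw [hb'def, this]
    ring_nf
    exact Dvd.intro _ rfl
  have hcand := hmin (-b', 1) (by simp) hdvd'
  have hsmall : x.1 ^ 2 + x.2 ^ 2 < (q : ℤ) ^ 2 := by
    have hcand' : x.1 ^ 2 + x.2 ^ 2 ≤ b' ^ 2 + 1 := by simpa using hcand
    nlinarith
  -- if q divides a nonzero coordinate we get a contradiction
  have hbig : ∀ a : ℤ, a ≠ 0 → (q : ℤ) ∣ a → (q : ℤ) ^ 2 ≤ a ^ 2 := by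
    intro a ha hd
    have h1 : (q : ℤ) ≤ |a| := Int.le_of_dvd (abs_pos.mpr ha) ((dvd_abs (q : ℤ) a).mpr hd)
    nlinarith [sq_abs a, abs_nonneg a]
  have hx1 : x.1 ≠ 0 := by
    intro h1
    have h2 : x.2 ≠ 0 := by
      intro h2; exact hx0 (Prod.ext h1 h2)
    have hdx2 : (q : ℤ) ∣ x.2 := by
      have : (q : ℤ) ∣ b * x.2 := by rwa [h1, zero_add] at hxmem
      exact (hqZ.dvd_mul.mp this).resolve_left hb
    have := hbig x.2 h2 hdx2
    nlinarith [sq_nonneg x.1]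
  have hx2 : x.2 ≠ 0 := by
    intro h2
    have hdx1 : (q : ℤ) ∣ x.1 := by rwa [h2, mul_zero, add_zero] at hxmem
    have := hbig x.1 hx1 hdx1
    nlinarith [sq_nonneg x.2]
  refine ⟨hx1, hx2, ?_⟩
  rw [Int.isCoprime_iff_gcd_eq_one]
  by_contra hg
  set g : ℕ := Int.gcd x.1 x.2 with hgdef
  have hg0 : g ≠ 0 := fun h => hx1 (Int.gcd_eq_zero_iff.mp h).1
  have hg2 : 2 ≤ (g : ℤ) := by
    have : 1 < g := Nat.lt_of_le_of_ne (Nat.one_le_iff_ne_zero.mpr hg0) (Ne.symm hg)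
    exact_mod_cast this
  obtain ⟨y1, hy1⟩ : (g : ℤ) ∣ x.1 := Int.gcd_dvd_left x.1 x.2
  obtain ⟨y2, hy2⟩ : (g : ℤ) ∣ x.2 := Int.gcd_dvd_right x.1 x.2
  -- q does not divide g
  have hqg : ¬ (q : ℤ) ∣ (g : ℤ) := by
    intro hd
    have hdx1 : (q : ℤ) ∣ x.1 := hy1 ▸ hd.mul_right y1
    have := hbig x.1 hx1 hdx1
    nlinarith [sq_nonneg x.2]
  have hy1ne : y1 ≠ 0 := by
    intro h; apply hx1; rw [hy1, h, mul_zero]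
  have hdy : (q : ℤ) ∣ y1 + b * y2 := by
    have h1 : (q : ℤ) ∣ (g : ℤ) * (y1 + b * y2) := by
      have : (g : ℤ) * (y1 + b * y2) = x.1 + b * x.2 := by rw [hy1, hy2]; ring
      rwa [this]
    exact (hqZ.dvd_mul.mp h1).resolve_left hqg
  have hylt := hmin (y1, y2) (by simp [hy1ne]) hdy
  simp only at hylt
  have hxy : x.1 ^ 2 + x.2 ^ 2 = (g : ℤ) ^ 2 * (y1 ^ 2 + y2 ^ 2) := by
    rw [hy1, hy2]; ring
  have hypos : 0 < y1 ^ 2 + y2 ^ 2 := by positivity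
  have hg4 : 4 ≤ (g : ℤ) ^ 2 := by nlinarith
  nlinarith [hylt, hxy, hg4, hypos]
end

section
/- For every real number x with |x| ≤ 2 one has |x| ≤ 1 + (x² − 1)/2 − (x² − 1)²/18. Equivalently, writing U₂(x) = x² − 1 and U₄(x) = x⁴ − 3x² + 1, one has |x| ≤ 17/18 + (4/9)·U₂(x) − (1/18)·U₄(x) for all real x with |x| ≤ 2. -/
theorem abs_le_chebyshev_bound :
    (∀ x : ℝ, |x| ≤ 2 → |x| ≤ 1 + (x ^ 2 - 1) / 2 - (x ^ 2 - 1) ^ 2 / 18) ∧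
      (∀ x : ℝ, |x| ≤ 2 →
        |x| ≤ 17 / 18 + (4 / 9) * (x ^ 2 - 1) - (1 / 18) * (x ^ 4 - 3 * x ^ 2 + 1)) := by
  have key : ∀ x : ℝ, |x| ≤ 2 → |x| ≤ 1 + (x ^ 2 - 1) / 2 - (x ^ 2 - 1) ^ 2 / 18 := by
    intro x hx
    have h0 : (0:ℝ) ≤ |x| := abs_nonneg x
    have h2 : |x| ^ 2 = x ^ 2 := sq_abs x
    nlinarith [sq_nonneg (|x| - 1), mul_nonneg (mul_nonneg (sq_nonneg (|x| - 1)) (by linarith : (0:ℝ) ≤ |x| + 4)) (by linarith : (0:ℝ) ≤ 2 - |x|)]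
  refine ⟨key, fun x hx => ?_⟩
  have := key x hx
  nlinarith [this]
end
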